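/- arXiv:2004.09539 — 2 statements merged into one kernel-verified Lean document; each statement's English description precedes it below -/
import Mathlib

section
/- Under the center-of-momentum kinematic setup, the identity E_CM · k⃗_CM = (E_p·k⃗ − E_k·p⃗) + ((p⃗ + k⃗) × (p⃗ × k⃗))/(E + E_CM) holds. -/
/-!
Write `q = p + k` and `s = q ⬝ q`. The vector triple product expansion together with `p = q - k`
gives `q × (p × k) = (q ⬝ k) q - s k`, while the boosted momentum is a combination of `k` and
`q` whose coefficients are rational in `E`, `E_CM` and the dot products. Since
`s = E² - E_CM² = (E + E_CM)(E - E_CM)`, the denominators `s` and `E + E_CM` cancel against each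
other and the two sides agree coefficient by coefficient.
-/

/-- Euclidean dot product on `ℝ³`. -/
noncomputable def dot3 (a b : Fin 3 → ℝ) : ℝ := ∑ i, a i * b i

/-- Euclidean norm on `ℝ³`. -/
noncomputable def norm3 (a : Fin 3 → ℝ) : ℝ := Real.sqrt (dot3 a a)

/-- Cross product on `ℝ³`. -/
noncomputable def cross3 (a b : Fin 3 → ℝ) : Fin 3 → ℝ :=
  ![a 1 * b 2 - a 2 * b 1, a 2 * b 0 - a 0 * b 2, a 0 * b 1 - a 1 * b 0]

open Matrix

theorem dot3_eq_dotProduct (a b : Fin 3 → ℝ) : dot3 a b = a ⬝ᵥ b := rfl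

theorem cross3_eq_crossProduct (a b : Fin 3 → ℝ) : cross3 a b = a ⨯₃ b := rfl

theorem add_cross_cross {R : Type*} [CommRing R] (p k : Fin 3 → R) :
    (p + k) ⨯₃ (p ⨯₃ k) = ((p + k) ⬝ᵥ k) • (p + k) - ((p + k) ⬝ᵥ (p + k)) • k := by
  rw [cross_cross_eq_smul_sub_smul']
  simp only [add_dotProduct, dotProduct_add, dotProduct_comm p k]
  module

section Boost

variable {K n : Type*} [Field K] [Fintype n]

/-- The spatial part of the Lorentz boost with velocity `β` and factor `γ` applied to the
four-momentum `(E, k)`. -/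
def boostSpatial (β : n → K) (γ E : K) (k : n → K) : n → K :=
  k + ((γ - 1) * (k ⬝ᵥ β / β ⬝ᵥ β)) • β - (γ * E) • β

theorem smul_boostSpatial_centerOfMomentum (p k : n → K) (Ep Ek ECM : K)
    (hsq : ECM ^ 2 = (Ep + Ek) ^ 2 - (p + k) ⬝ᵥ (p + k)) (hq : (p + k) ⬝ᵥ (p + k) ≠ 0)
    (hE : Ep + Ek ≠ 0) (hECM : ECM ≠ 0) :
    ECM • boostSpatial ((1 / (Ep + Ek)) • (p + k)) ((Ep + Ek) / ECM) Ek k =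
      (Ep • k - Ek • p) + (1 / (Ep + Ek + ECM)) •
        (((p + k) ⬝ᵥ k) • (p + k) - ((p + k) ⬝ᵥ (p + k)) • k) := by
  have hsum : Ep + Ek + ECM ≠ 0 := by
    rintro h
    apply hq
    linear_combination (Ep + Ek - ECM) * h + hsq
  unfold boostSpatial
  simp only [smul_dotProduct, dotProduct_smul, smul_eq_mul, dotProduct_comm k (p + k)]
  match_scalars <;> field_simp
  · linear_combination ((p + k) ⬝ᵥ (p + k) - (p + k) ⬝ᵥ k) * hsq
  · linear_combination -((p + k) ⬝ᵥ k) * hsq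

end Boost

theorem kCM_decomposition_general
    (p k : Fin 3 → ℝ) (Ep Ek : ℝ)
    (hpk : p + k ≠ 0)
    (hE : dot3 (p + k) (p + k) < (Ep + Ek) ^ 2) :
    let E := Ep + Ek
    let ECM := Real.sqrt (E ^ 2 - dot3 (p + k) (p + k))
    let β := (1 / E) • (p + k)
    let γ := E / ECM
    let kCM := k + ((γ - 1) * (dot3 k β / dot3 β β)) • β - (γ * Ek) • β
    ECM • kCM = (Ep • k - Ek • p) + (1 / (E + ECM)) • cross3 (p + k) (cross3 p k) := by
  intro E ECM β γ kCM
  simp only [dot3_eq_dotProduct] at hE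
  have hq : (p + k) ⬝ᵥ (p + k) ≠ 0 := dotProduct_self_eq_zero.not.mpr hpk
  have hE0 : E ≠ 0 := by
    have hE2 : 0 < E ^ 2 := (dotProduct_star_self_nonneg (p + k)).trans_lt hE
    rintro h
    simp [h] at hE2
  have hsq : ECM ^ 2 = E ^ 2 - (p + k) ⬝ᵥ (p + k) := Real.sq_sqrt (sub_pos.mpr hE).le
  have hECM : ECM ≠ 0 := (Real.sqrt_pos.mpr (sub_pos.mpr hE)).ne'
  rw [cross3_eq_crossProduct, cross3_eq_crossProduct, add_cross_cross]
  exact smul_boostSpatial_centerOfMomentum p k Ep Ek ECM hsq hq hE0 hECM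

/-- Center-of-momentum kinematics: the boosted dark matter momentum satisfies
`E_CM • k⃗_CM = (E_p • k⃗ − E_k • p⃗) + ((p⃗+k⃗) × (p⃗×k⃗))/(E + E_CM)`. -/
theorem kCM_decomposition
    (p k : Fin 3 → ℝ) (Ep Ek : ℝ) (hEp : 0 < Ep) (hEk : 0 < Ek)
    (hpk : p + k ≠ 0)
    (hE : dot3 (p + k) (p + k) < (Ep + Ek) ^ 2) :
    let E := Ep + Ek
    let ECM := Real.sqrt (E ^ 2 - dot3 (p + k) (p + k))
    let β := (1 / E) • (p + k)
    let γ := E / ECM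
    let kCM := k + ((γ - 1) * (dot3 k β / dot3 β β)) • β - (γ * Ek) • β
    ECM • kCM = (Ep • k - Ek • p) + (1 / (E + ECM)) • cross3 (p + k) (cross3 p k) :=
  kCM_decomposition_general p k Ep Ek hpk hE
end

section
/- For any three-vectors p⃗, k⃗ ∈ ℝ³ and any reals E_p, E_k, with E = E_p + E_k and B := E_p·|k⃗|² − E_k·|p⃗|² + (E_p − E_k)·(p⃗·k⃗), the polynomial identity |p⃗ + k⃗|²·( |E_p·k⃗ − E_k·p⃗|² − |p⃗ × k⃗|² ) − B² = |p⃗ × k⃗|²·( E² − |p⃗ + k⃗|² ) holds. -/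
/-- Polynomial identity controlling `(1 − cos²δ)/cos²δ`:
`|p⃗+k⃗|²(|E_p k⃗ − E_k p⃗|² − |p⃗×k⃗|²) − B² = |p⃗×k⃗|²(E² − |p⃗+k⃗|²)`,
where `E = Ep + Ek` and `B = E_p|k⃗|² − E_k|p⃗|² + (E_p − E_k)(p⃗·k⃗)`. -/
theorem A_sq_sub_B_sq
    (p k : Fin 3 → ℝ) (Ep Ek : ℝ) :
    let E := Ep + Ek
    let B := Ep * dot3 k k - Ek * dot3 p p + (Ep - Ek) * dot3 p k
    dot3 (p + k) (p + k) *
        (dot3 (Ep • k - Ek • p) (Ep • k - Ek • p) - dot3 (cross3 p k) (cross3 p k)) -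
      B ^ 2 =
      dot3 (cross3 p k) (cross3 p k) * (E ^ 2 - dot3 (p + k) (p + k)) := by
  simp only [dot3, cross3, Fin.sum_univ_three, Pi.add_apply, Pi.sub_apply, Pi.smul_apply,
    smul_eq_mul, Matrix.cons_val_zero, Matrix.cons_val_one, Matrix.head_cons,
    Matrix.cons_val_two, Matrix.tail_cons]
  ring
end
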